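/- The syntactic faster-than relation enlarges urgent sets: if P' ≽ P then U(P') ⊇ U(P). -/

import Mathlib

/-- Actions: names, conames, and the internal action τ. -/
inductive Act where
  | name : ℕ → Act
  | coname : ℕ → Act
  | tau : Act
deriving DecidableEq

/-- Complementation of actions. -/
def Act.co : Act → Act
  | .name a => .coname a
  | .coname a => .name a
  | .tau => .tau

/-- TACS terms. -/
inductive Tm where
  | nil : Tm
  | var : ℕ → Tm
  | act : Act → Tm → Tm
  | sigma : Tm → Tm
  | sum : Tm → Tm → Tm
  | par : Tm → Tm → Tm
  | res : Finset Act → Tm → Tm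
  | rel : (Act → Act) → Tm → Tm
  | mu : ℕ → Tm → Tm

namespace Tm

/-- Substitution P[Q/y] (of a term Q for free occurrences of y). -/
def subst (y : ℕ) (Q : Tm) : Tm → Tm
  | nil => nil
  | var x => if x = y then Q else var x
  | act a P => act a (subst y Q P)
  | sigma P => sigma (subst y Q P)
  | sum P R => sum (subst y Q P) (subst y Q R)
  | par P R => par (subst y Q P) (subst y Q R)
  | res L P => res L (subst y Q P)
  | rel f P => rel f (subst y Q P)
  | mu x P => if x = y then mu x P else mu x (subst y Q P)

/-- x is guarded in P: every free occurrence of x is under an action prefix. -/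
def guarded (x : ℕ) : Tm → Prop
  | nil => True
  | var y => y ≠ x
  | act _ _ => True
  | sigma P => guarded x P
  | sum P Q => guarded x P ∧ guarded x Q
  | par P Q => guarded x P ∧ guarded x Q
  | res _ P => guarded x P
  | rel _ P => guarded x P
  | mu y P => y = x ∨ guarded x P

/-- x occurs free in P. -/
def isFree (x : ℕ) : Tm → Prop
  | nil => False
  | var y => y = x
  | act _ P => isFree x P
  | sigma P => isFree x P
  | sum P Q => isFree x P ∨ isFree x Q
  | par P Q => isFree x P ∨ isFree x Q
  | res _ P => isFree x P
  | rel _ P => isFree x P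
  | mu y P => y ≠ x ∧ isFree x P

/-- Every recursion μx.P in the term has x guarded in P. -/
def wg : Tm → Prop
  | nil => True
  | var _ => True
  | act _ P => wg P
  | sigma P => wg P
  | sum P Q => wg P ∧ wg Q
  | par P Q => wg P ∧ wg Q
  | res _ P => wg P
  | rel _ P => wg P
  | mu x P => guarded x P ∧ wg P

/-- Processes are closed, guarded terms. -/
def IsProc (P : Tm) : Prop := (∀ x, ¬ isFree x P) ∧ wg P

/-- Urgent action sets. -/
def urgent : Tm → Set Act
  | nil => ∅
  | var _ => ∅
  | act a _ => {a}
  | sigma _ => ∅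
  | sum P Q => urgent P ∪ urgent Q
  | par P Q => urgent P ∪ urgent Q ∪
      {x | x = Act.tau ∧ ∃ a ∈ urgent P, Act.co a ∈ urgent Q}
  | res L P => urgent P \ (↑L ∪ (Act.co '' ↑L))
  | rel f P => f '' urgent P
  | mu _ P => urgent P

/-- Action transitions. -/
inductive ATrans : Tm → Act → Tm → Prop
  | act {a P} : ATrans (act a P) a P
  | pre {P a P'} : ATrans P a P' → ATrans (sigma P) a P'
  | mrec {P P' : Tm} {a : Act} {x : ℕ} : ATrans P a P' → ATrans (mu x P) a (subst x (mu x P) P')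
  | sum1 {P a P' Q} : ATrans P a P' → ATrans (sum P Q) a P'
  | sum2 {Q a Q' P} : ATrans Q a Q' → ATrans (sum P Q) a Q'
  | com1 {P a P' Q} : ATrans P a P' → ATrans (par P Q) a (par P' Q)
  | com2 {Q a Q' P} : ATrans Q a Q' → ATrans (par P Q) a (par P Q')
  | com3 {P a P' Q Q'} : a ≠ Act.tau → ATrans P a P' → ATrans Q (Act.co a) Q' →
      ATrans (par P Q) Act.tau (par P' Q')
  | rel {P a P' f} : ATrans P a P' → ATrans (rel f P) (f a) (rel f P')
  | res {P P' : Tm} {a : Act} {L : Finset Act} : ATrans P a P' →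
      a ∉ ((↑L : Set Act) ∪ Act.co '' (↑L : Set Act)) →
      ATrans (res L P) a (res L P')

/-- Clock transitions; `CTrans false` is →σ₁ (without tNew),
    `CTrans true` is →σ₂ (with tNew). -/
inductive CTrans : Bool → Tm → Tm → Prop
  | tNil {i} : CTrans i nil nil
  | tAct {i a P} : a ≠ Act.tau → CTrans i (act a P) (act a P)
  | tPre {i P} : CTrans i (sigma P) P
  | tNew {P P'} : CTrans true P P' → CTrans true (sigma P) P'
  | tSum {i P P' Q Q'} : CTrans i P P' → CTrans i Q Q' →
      CTrans i (sum P Q) (sum P' Q')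
  | tCom {i P P' Q Q'} : CTrans i P P' → CTrans i Q Q' →
      Act.tau ∉ urgent (par P Q) → CTrans i (par P Q) (par P' Q')
  | tRes {i P P' L} : CTrans i P P' → CTrans i (res L P) (res L P')
  | tRel {i P P' f} : CTrans i P P' → CTrans i (rel f P) (rel f P')
  | tRec {i P P' x} : CTrans i P P' → CTrans i (mu x P) (subst x (mu x P) P')

/-- Labels: actions or the clock σ. -/
inductive Lbl where
  | act : Act → Lbl
  | clock : Lbl

/-- Labelled transitions for a label γ ∈ 𝒜 ∪ {σ} (clock steps of the given type). -/
def LTrans (i : Bool) (P : Tm) : Lbl → Tm → Prop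
  | .act a, P' => ATrans P a P'
  | .clock, P' => CTrans i P P'

/-- The syntactic faster-than relation ≽ (Faster P' P means P' ≽ P). -/
inductive Faster : Tm → Tm → Prop
  | refl {P} : Faster P P
  | sigma {P} : Faster P (sigma P)
  | par {P' P Q' Q} : Faster P' P → Faster Q' Q → Faster (par P' Q') (par P Q)
  | sum {P' P Q' Q} : Faster P' P → Faster Q' Q → Faster (sum P' Q') (sum P Q)
  | res {P' P L} : Faster P' P → Faster (res L P') (res L P)
  | rel {P' P f} : Faster P' P → Faster (rel f P') (rel f P)
  | mrec {P' P : Tm} {x : ℕ} : Faster P' P → guarded x P →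
      Faster (subst x (mu x P) P') (mu x P)

/-- ≽⁺, the transitive closure of ≽. -/
def FasterTC : Tm → Tm → Prop := Relation.TransGen Faster

/-- i-naive faster-than relations. -/
def IsNaiveFT (i : Bool) (R : Tm → Tm → Prop) : Prop :=
  ∀ P Q, R P Q →
    (∀ a P', ATrans P a P' → ∃ Q', ATrans Q a Q' ∧ R P' Q') ∧
    (∀ a Q', ATrans Q a Q' → ∃ P', ATrans P a P' ∧ R P' Q') ∧
    (∀ P', CTrans i P P' → ∃ Q', CTrans i Q Q' ∧ R P' Q')

/-- The i-naive faster-than preorder (on processes). -/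
def NaivePre (i : Bool) (P Q : Tm) : Prop :=
  ∃ R : Tm → Tm → Prop, (∀ a b, R a b → IsProc a ∧ IsProc b) ∧
    IsNaiveFT i R ∧ R P Q

/-- i-delayed faster-than relations. -/
def IsDelayedFT (i : Bool) (R : Tm → Tm → Prop) : Prop :=
  ∀ P Q, R P Q →
    (∀ a P', ATrans P a P' →
      ∃ Q₁ Q₂ Q', Relation.ReflTransGen (CTrans i) Q Q₁ ∧ ATrans Q₁ a Q₂ ∧
        Relation.ReflTransGen (CTrans i) Q₂ Q' ∧ R P' Q') ∧
    (∀ a Q', ATrans Q a Q' → ∃ P', ATrans P a P' ∧ R P' Q') ∧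
    (∀ P', CTrans i P P' →
      ∃ Q', Relation.TransGen (CTrans i) Q Q' ∧ R P' Q')

/-- The i-delayed faster-than preorder (on processes). -/
def DelayedPre (i : Bool) (P Q : Tm) : Prop :=
  ∃ R : Tm → Tm → Prop, (∀ a b, R a b → IsProc a ∧ IsProc b) ∧
    IsDelayedFT i R ∧ R P Q

/-- Strong i-faster-than relations. -/
def IsStrongFT (i : Bool) (R : Tm → Tm → Prop) : Prop :=
  ∀ P Q, R P Q →
    (∀ a P', ATrans P a P' → ∃ Q', ATrans Q a Q' ∧ R P' Q') ∧
    (∀ a Q', ATrans Q a Q' → ∃ P', ATrans P a P' ∧ R P' Q') ∧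
    (∀ P', CTrans i P P' →
      urgent Q ⊆ urgent P ∧ ∃ Q', CTrans i Q Q' ∧ R P' Q')

/-- Strong c-faster-than relations: type-1 steps matched by type-2 steps. -/
def IsStrongC (R : Tm → Tm → Prop) : Prop :=
  ∀ P Q, R P Q →
    (∀ a P', ATrans P a P' → ∃ Q', ATrans Q a Q' ∧ R P' Q') ∧
    (∀ a Q', ATrans Q a Q' → ∃ P', ATrans P a P' ∧ R P' Q') ∧
    (∀ P', CTrans false P P' →
      urgent Q ⊆ urgent P ∧ ∃ Q', CTrans true Q Q' ∧ R P' Q')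

/-- The strong i-faster-than precongruence (on processes). -/
def StrongPre (i : Bool) (P Q : Tm) : Prop :=
  ∃ R : Tm → Tm → Prop, (∀ a b, R a b → IsProc a ∧ IsProc b) ∧
    IsStrongFT i R ∧ R P Q

/-- The strong c-faster-than precongruence (on processes). -/
def StrongPreC (P Q : Tm) : Prop :=
  ∃ R : Tm → Tm → Prop, (∀ a b, R a b → IsProc a ∧ IsProc b) ∧
    IsStrongC R ∧ R P Q

end Tm

open Tm

/-! Urgent sets only look at the unguarded part of a term and variables contribute nothing, so every
constructor is monotone for `urgent` and substitution can only enlarge it; `≽` is built from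
exactly these operations. -/

namespace Tm

theorem urgent_sum_mono {P P' Q Q' : Tm} (hP : urgent P ⊆ urgent P') (hQ : urgent Q ⊆ urgent Q') :
    urgent (sum P Q) ⊆ urgent (sum P' Q') :=
  Set.union_subset_union hP hQ

theorem urgent_par_mono {P P' Q Q' : Tm} (hP : urgent P ⊆ urgent P') (hQ : urgent Q ⊆ urgent Q') :
    urgent (par P Q) ⊆ urgent (par P' Q') := by
  refine Set.union_subset_union (Set.union_subset_union hP hQ) ?_
  rintro x ⟨rfl, a, haP, haQ⟩
  exact ⟨rfl, a, hP haP, hQ haQ⟩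

theorem urgent_res_mono {P P' : Tm} (L : Finset Act) (h : urgent P ⊆ urgent P') :
    urgent (res L P) ⊆ urgent (res L P') :=
  Set.sdiff_subset_sdiff_left h

theorem urgent_rel_mono {P P' : Tm} (f : Act → Act) (h : urgent P ⊆ urgent P') :
    urgent (rel f P) ⊆ urgent (rel f P') :=
  Set.image_mono h

theorem urgent_subset_urgent_subst (y : ℕ) (Q : Tm) (P : Tm) :
    urgent P ⊆ urgent (subst y Q P) := by
  induction P with
  | nil | act | sigma => simp [subst, urgent]
  | var x => simp [urgent]
  | sum P R ihP ihR => exact urgent_sum_mono ihP ihR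
  | par P R ihP ihR => exact urgent_par_mono ihP ihR
  | res L P ih => exact urgent_res_mono L ih
  | rel f P ih => exact urgent_rel_mono f ih
  | mu x P ih =>
    simp only [subst]
    split
    · rfl
    · exact ih

end Tm

theorem faster_urgent (P P' : Tm) :
    Faster P' P → urgent P ⊆ urgent P' := by
  intro h
  induction h with
  | refl => rfl
  | sigma => simp [urgent]
  | par _ _ ihP ihQ => exact urgent_par_mono ihP ihQ
  | sum _ _ ihP ihQ => exact urgent_sum_mono ihP ihQ
  | res _ ih => exact urgent_res_mono _ ih
  | rel _ ih => exact urgent_rel_mono _ ih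
  | @mrec P' P x _ _ ih => exact ih.trans (urgent_subset_urgent_subst x (mu x P) P')
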